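/- arXiv:2411.18127 — 6 statements merged into one kernel-verified Lean document; each statement's English description precedes it below -/
import Mathlib

section
/- Let l, u ∈ ℝⁿ with lᵢ ≤ uᵢ, let λ ≥ 0, and let x, g ∈ ℝⁿ with lᵢ ≤ xᵢ ≤ uᵢ for all i. Set q = x − g and define the update x⁺ = x + λ(−x + P_{[l,u]}(q)). Then for every index i there exists γᵢ ≥ 0 such that x⁺ᵢ = xᵢ − γᵢ gᵢ; moreover γᵢ can be taken equal to λ whenever lᵢ ≤ qᵢ ≤ uᵢ. (The discrete-time projected update is a componentwise scaled gradient step.) -/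
/-- The discrete-time box-projected update is a componentwise scaled gradient
step: `x⁺ᵢ = xᵢ − γᵢ gᵢ` with `γᵢ ≥ 0`, and `γᵢ = λ` whenever `qᵢ = xᵢ − gᵢ`
lies inside the box. -/
theorem stmt4 (n : ℕ) (l u x g : Fin n → ℝ) (hlu : ∀ i, l i ≤ u i)
    (lam : ℝ) (hlam : 0 ≤ lam)
    (hxl : ∀ i, l i ≤ x i) (hxu : ∀ i, x i ≤ u i)
    (q : Fin n → ℝ) (hq : ∀ i, q i = x i - g i)
    (xp : Fin n → ℝ)
    (hxp : ∀ i, xp i = x i + lam * (-(x i) + min (max (q i) (l i)) (u i))) :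
    ∀ i, ∃ γ : ℝ, 0 ≤ γ ∧ xp i = x i - γ * g i ∧
      ((l i ≤ q i ∧ q i ≤ u i) → γ = lam) := by
  intro i
  rcases le_or_gt (l i) (q i) with hl | hl
  · rcases le_or_gt (q i) (u i) with hu | hu
    · -- inside the box: γ = lam
      refine ⟨lam, hlam, ?_, fun _ => rfl⟩
      rw [hxp i, max_eq_left hl, min_eq_left hu, hq i]
      ring
    · -- q i > u i : projection is u i; g i < x i - u i ≤ 0
      have hg : g i < 0 := by
        have := hq i; nlinarith [hxu i]
      refine ⟨lam * (x i - u i) / g i, ?_, ?_, ?_⟩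
      · apply div_nonneg_of_nonpos (by nlinarith [hxu i]) hg.le
      · rw [hxp i]
        have hmax : max (q i) (l i) = q i := max_eq_left (le_trans (hlu i) hu.le)
        rw [hmax, min_eq_right hu.le, div_mul_cancel₀ _ hg.ne]
        ring
      · intro h; exact absurd h.2 (not_le.mpr hu)
  · -- q i < l i : projection is l i; g i > x i - l i ≥ 0
    have hg : 0 < g i := by
      have := hq i; nlinarith [hxl i]
    refine ⟨lam * (x i - l i) / g i, ?_, ?_, ?_⟩
    · apply div_nonneg _ hg.le
      nlinarith [hxl i]
    · rw [hxp i, max_eq_right hl.le, min_eq_left (hlu i), div_mul_cancel₀ _ hg.ne']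
      ring
    · intro h; exact absurd h.1 (not_le.mpr hl)
end

section
/- Let x, g ∈ ℝⁿ, λ > 0, and x̂ ∈ ℝⁿ with x̂ᵢ ≥ 0 for all i and ⟨g, x − x̂⟩ ≥ 0. Set d = [x − g]₊ − x and x⁺ = x + λd, and suppose there exist γᵢ ≥ 0 (i = 1,…,n) such that λdᵢ = −γᵢ gᵢ for every i. Then ‖x⁺ − x̂‖² − ‖x − x̂‖² ≤ 2·Σᵢ γᵢ gᵢ² + (λ² − 2λ)·‖d‖². (This is the key Lyapunov difference estimate for the discrete-time projection neural network, with L(y) = ‖y − x̂‖².) -/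
/-!
`x + d = [x - g]₊` is the projection of `x - g` onto the nonnegative orthant, which contains `x̂`,
so the variational inequality of the projection gives `⟨g + d, x - x̂ + d⟩ ≤ 0`; together with
`⟨g, x - x̂⟩ ≥ 0` this yields `⟨x - x̂, d⟩ + ⟨g, d⟩ + ‖d‖² ≤ 0`. Expanding
`‖x - x̂ + λd‖² - ‖x - x̂‖² = 2λ⟨x - x̂, d⟩ + λ²‖d‖²` and using `∑ γᵢ gᵢ² = -λ⟨d, g⟩`, the
difference of the two sides of the estimate is `2λ (⟨x - x̂, d⟩ + ⟨g, d⟩ + ‖d‖²) ≤ 0`.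
-/

open RealInnerProductSpace

lemma sub_max_zero_mul_sub_max_zero_nonpos {a c : ℝ} (hc : 0 ≤ c) :
    (a - max a 0) * (c - max a 0) ≤ 0 := by
  rcases le_total a 0 with ha | ha
  · rw [max_eq_right ha, sub_zero, sub_zero]
    exact mul_nonpos_of_nonpos_of_nonneg ha hc
  · rw [max_eq_left ha, sub_self, zero_mul]

/-- Variational inequality of the projection onto the nonnegative orthant. -/
lemma inner_sub_sub_nonpos_of_eq_max_zero {ι : Type*} [Fintype ι]
    {v p z : EuclideanSpace ℝ ι} (hp : ∀ i, p i = max (v i) 0) (hz : ∀ i, 0 ≤ z i) :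
    ⟪v - p, z - p⟫ ≤ 0 := by
  rw [PiLp.inner_apply]
  refine Finset.sum_nonpos fun i _ => ?_
  simp only [PiLp.sub_apply, hp, RCLike.inner_apply, conj_trivial]
  rw [mul_comm]
  exact sub_max_zero_mul_sub_max_zero_nonpos (hz i)

lemma norm_add_smul_sq_sub_norm_sq {E : Type*} [NormedAddCommGroup E] [InnerProductSpace ℝ E]
    (y d : E) (t : ℝ) : ‖y + t • d‖ ^ 2 - ‖y‖ ^ 2 = 2 * t * ⟪y, d⟫ + t ^ 2 * ‖d‖ ^ 2 := by
  rw [norm_add_sq_real, inner_smul_right, norm_smul, mul_pow, Real.norm_eq_abs, sq_abs]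
  ring

lemma sum_mul_sq_eq_neg_smul_inner {ι : Type*} [Fintype ι] {d g : EuclideanSpace ℝ ι}
    {γ : ι → ℝ} {t : ℝ} (h : ∀ i, t * d i = -(γ i * g i)) :
    ∑ i, γ i * g i ^ 2 = -(t * ⟪d, g⟫) := by
  rw [PiLp.inner_apply, Finset.mul_sum, ← Finset.sum_neg_distrib]
  refine Finset.sum_congr rfl fun i _ => ?_
  simp only [RCLike.inner_apply, conj_trivial]
  linear_combination g i * h i

theorem stmt9_general (n : ℕ) (x g xhat : EuclideanSpace ℝ (Fin n))
    (lam : ℝ) (hlam : 0 < lam)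
    (hxhat : ∀ i, 0 ≤ xhat i) (hgx : 0 ≤ ⟪g, x - xhat⟫)
    (d : EuclideanSpace ℝ (Fin n))
    (hd : ∀ i, d i = max (x i - g i) 0 - x i)
    (xp : EuclideanSpace ℝ (Fin n)) (hxp : xp = x + lam • d)
    (γ : Fin n → ℝ)
    (hγd : ∀ i, lam * d i = -(γ i * g i)) :
    ‖xp - xhat‖ ^ 2 - ‖x - xhat‖ ^ 2 ≤
      2 * (∑ i, γ i * g i ^ 2) + (lam ^ 2 - 2 * lam) * ‖d‖ ^ 2 := by
  have hproj : ⟪g + d, x - xhat + d⟫ ≤ 0 := by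
    have hp : ∀ i, (x + d) i = max ((x - g) i) 0 := fun i => by
      simp only [PiLp.add_apply, PiLp.sub_apply, hd]; ring
    have h := inner_sub_sub_nonpos_of_eq_max_zero hp hxhat
    rwa [show x - g - (x + d) = -(g + d) by abel, show xhat - (x + d) = -(x - xhat + d) by abel,
      inner_neg_neg] at h
  have hdescent : ⟪x - xhat, d⟫ + ⟪d, g⟫ + ‖d‖ ^ 2 ≤ 0 := by
    rw [inner_add_left, inner_add_right, inner_add_right, real_inner_self_eq_norm_sq,
      real_inner_comm (x - xhat) d] at hproj
    rw [real_inner_comm g d]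
    linarith
  rw [hxp, show x + lam • d - xhat = x - xhat + lam • d by abel, norm_add_smul_sq_sub_norm_sq,
    sum_mul_sq_eq_neg_smul_inner hγd]
  linarith [mul_nonpos_of_nonneg_of_nonpos hlam.le hdescent]

/-- Key Lyapunov difference estimate for the discrete-time projection neural
network with Lyapunov function `L(y) = ‖y − x̂‖²`. -/
theorem stmt9 (n : ℕ) (x g xhat : EuclideanSpace ℝ (Fin n))
    (lam : ℝ) (hlam : 0 < lam)
    (hxhat : ∀ i, 0 ≤ xhat i) (hgx : 0 ≤ ⟪g, x - xhat⟫)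
    (d : EuclideanSpace ℝ (Fin n))
    (hd : ∀ i, d i = max (x i - g i) 0 - x i)
    (xp : EuclideanSpace ℝ (Fin n)) (hxp : xp = x + lam • d)
    (γ : Fin n → ℝ) (hγ : ∀ i, 0 ≤ γ i)
    (hγd : ∀ i, lam * d i = -(γ i * g i)) :
    ‖xp - xhat‖ ^ 2 - ‖x - xhat‖ ^ 2 ≤
      2 * (∑ i, γ i * g i ^ 2) + (lam ^ 2 - 2 * lam) * ‖d‖ ^ 2 :=
  stmt9_general n x g xhat lam hlam hxhat hgx d hd xp hxp γ hγd
end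

section
/- Let x, g ∈ ℝⁿ, λ > 0, and x̂ ∈ ℝⁿ with x̂ᵢ ≥ 0 for all i and ⟨g, x − x̂⟩ ≥ 0. Set d = [x − g]₊ − x and x⁺ = x + λd, and suppose there exist γᵢ ≥ 0 (i = 1,…,n) such that λdᵢ = −γᵢ gᵢ for every i. If the step size λ satisfies 2·Σᵢ γᵢ gᵢ² + (λ² − 2λ)·‖d‖² ≤ 0, then ‖x⁺ − x̂‖ ≤ ‖x − x̂‖; that is, the discrete-time projection neural network update does not increase the Lyapunov function L(y) = ‖y − x̂‖². -/
open RealInnerProductSpace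

/-!
`x + d` is the projection of `x - g` onto the nonnegative orthant, which contains `x̂`, so the
variational inequality of the projection gives `⟪d + g, x + d - x̂⟫ ≤ 0`. Expanding
`‖x + λ d - x̂‖²` and using `⟪g, x - x̂⟫ ≥ 0` bounds the increase of the Lyapunov function by
`-2λ⟪g, d⟫ + (λ² - 2λ)‖d‖²`, and `-λ⟪g, d⟫ = Σᵢ γᵢ gᵢ²` by the scaled-gradient representation.
-/

theorem max_zero_sub_mul_max_zero_sub_nonpos {a b : ℝ} (hb : 0 ≤ b) :
    (max a 0 - a) * (max a 0 - b) ≤ 0 := by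
  rcases le_total a 0 with ha | ha
  · rw [max_eq_right ha]
    nlinarith
  · rw [max_eq_left ha, sub_self, zero_mul]

theorem EuclideanSpace.inner_sub_posPart_sub_nonpos {ι : Type*} [Fintype ι]
    {y z p : EuclideanSpace ℝ ι} (hp : ∀ i, p i = max (y i) 0) (hz : ∀ i, 0 ≤ z i) :
    ⟪p - y, p - z⟫ ≤ 0 := by
  rw [PiLp.inner_apply]
  refine Finset.sum_nonpos fun i _ => ?_
  simp only [PiLp.sub_apply, hp, RCLike.inner_apply', conj_trivial]
  exact max_zero_sub_mul_max_zero_sub_nonpos (hz i)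

theorem norm_add_smul_sub_sq_le {F : Type*} [NormedAddCommGroup F] [InnerProductSpace ℝ F]
    {x g xhat d : F} {lam : ℝ} (hlam : 0 ≤ lam)
    (hvi : ⟪d + g, x + d - xhat⟫ ≤ 0) (hgx : 0 ≤ ⟪g, x - xhat⟫) :
    ‖x + lam • d - xhat‖ ^ 2 ≤
      ‖x - xhat‖ ^ 2 - 2 * (lam * ⟪g, d⟫) + (lam ^ 2 - 2 * lam) * ‖d‖ ^ 2 := by
  have hexpand : ‖x + lam • d - xhat‖ ^ 2 =
      ‖x - xhat‖ ^ 2 + 2 * (lam * ⟪d, x - xhat⟫) + lam ^ 2 * ‖d‖ ^ 2 := by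
    rw [show x + lam • d - xhat = (x - xhat) + lam • d by abel, norm_add_sq_real,
      real_inner_smul_right, norm_smul, real_inner_comm, mul_pow, Real.norm_eq_abs, sq_abs]
  have hsplit : ⟪d + g, x + d - xhat⟫ =
      ⟪d, x - xhat⟫ + ‖d‖ ^ 2 + ⟪g, d⟫ + ⟪g, x - xhat⟫ := by
    rw [show x + d - xhat = (x - xhat) + d by abel, inner_add_left, inner_add_right,
      inner_add_right, real_inner_self_eq_norm_sq]
    ring
  rw [hexpand]
  nlinarith [mul_nonneg hlam hgx]

theorem EuclideanSpace.mul_inner_eq_neg_sum {ι : Type*} [Fintype ι]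
    {g d : EuclideanSpace ℝ ι} {c : ℝ} {γ : ι → ℝ} (h : ∀ i, c * d i = -(γ i * g i)) :
    c * ⟪g, d⟫ = -∑ i, γ i * g i ^ 2 := by
  rw [PiLp.inner_apply, Finset.mul_sum, ← Finset.sum_neg_distrib]
  refine Finset.sum_congr rfl fun i _ => ?_
  rw [RCLike.inner_apply', conj_trivial]
  linear_combination g i * h i

theorem stmt10_general (n : ℕ) (x g xhat : EuclideanSpace ℝ (Fin n))
    (lam : ℝ) (hlam : 0 < lam)
    (hxhat : ∀ i, 0 ≤ xhat i) (hgx : 0 ≤ ⟪g, x - xhat⟫)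
    (d : EuclideanSpace ℝ (Fin n))
    (hd : ∀ i, d i = max (x i - g i) 0 - x i)
    (xp : EuclideanSpace ℝ (Fin n)) (hxp : xp = x + lam • d)
    (γ : Fin n → ℝ)
    (hγd : ∀ i, lam * d i = -(γ i * g i))
    (hstep : 2 * (∑ i, γ i * g i ^ 2) + (lam ^ 2 - 2 * lam) * ‖d‖ ^ 2 ≤ 0) :
    ‖xp - xhat‖ ≤ ‖x - xhat‖ := by
  have hvi : ⟪d + g, x + d - xhat⟫ ≤ 0 := by
    have hproj : ∀ i, (x + d) i = max ((x - g) i) 0 := fun i => by simp [hd]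
    simpa using EuclideanSpace.inner_sub_posPart_sub_nonpos hproj hxhat
  have hdescent := norm_add_smul_sub_sq_le hlam.le hvi hgx
  rw [EuclideanSpace.mul_inner_eq_neg_sum hγd] at hdescent
  rw [hxp, ← sq_le_sq₀ (norm_nonneg _) (norm_nonneg _)]
  linarith

/-- If the step size satisfies the Lyapunov condition
`2·Σᵢ γᵢ gᵢ² + (λ² − 2λ)·‖d‖² ≤ 0`, then the discrete-time projection neural
network update does not increase the Lyapunov function `L(y) = ‖y − x̂‖²`. -/
theorem stmt10 (n : ℕ) (x g xhat : EuclideanSpace ℝ (Fin n))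
    (lam : ℝ) (hlam : 0 < lam)
    (hxhat : ∀ i, 0 ≤ xhat i) (hgx : 0 ≤ ⟪g, x - xhat⟫)
    (d : EuclideanSpace ℝ (Fin n))
    (hd : ∀ i, d i = max (x i - g i) 0 - x i)
    (xp : EuclideanSpace ℝ (Fin n)) (hxp : xp = x + lam • d)
    (γ : Fin n → ℝ) (hγ : ∀ i, 0 ≤ γ i)
    (hγd : ∀ i, lam * d i = -(γ i * g i))
    (hstep : 2 * (∑ i, γ i * g i ^ 2) + (lam ^ 2 - 2 * lam) * ‖d‖ ^ 2 ≤ 0) :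
    ‖xp - xhat‖ ≤ ‖x - xhat‖ :=
  stmt10_general n x g xhat lam hlam hxhat hgx d hd xp hxp γ hγd hstep
end

section
/- Let f : ℝⁿ → ℝ be differentiable, let x ∈ ℝⁿ with xᵢ ≥ 0 for all i, let λ > 0 and α ∈ (0,1). Set g = ∇f(x), d = [x − g]₊ − x, and x⁺ = x + λd. If the Armijo inequality f(x⁺) − f(x) ≤ α·λ·⟨g, x⁺ − x⟩ holds, then f(x⁺) − f(x) ≤ −α·λ²·‖d‖² ≤ 0; in particular f(x⁺) ≤ f(x). -/
open RealInnerProductSpace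

/-- If the Armijo inequality holds at step size `λ` for the projected gradient
step `x⁺ = x + λ([x − ∇f(x)]₊ − x)` from a nonnegative point `x`, then the
objective decreases: `f(x⁺) − f(x) ≤ −αλ²‖d‖² ≤ 0`. -/
theorem stmt11 (n : ℕ) (f : EuclideanSpace ℝ (Fin n) → ℝ)
    (hf : Differentiable ℝ f)
    (x : EuclideanSpace ℝ (Fin n)) (hx : ∀ i, 0 ≤ x i)
    (lam α : ℝ) (hlam : 0 < lam) (hα : α ∈ Set.Ioo (0 : ℝ) 1)
    (g : EuclideanSpace ℝ (Fin n)) (hg : g = gradient f x)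
    (d : EuclideanSpace ℝ (Fin n))
    (hd : ∀ i, d i = max (x i - g i) 0 - x i)
    (xp : EuclideanSpace ℝ (Fin n)) (hxp : xp = x + lam • d)
    (harmijo : f xp - f x ≤ α * lam * ⟪g, xp - x⟫) :
    f xp - f x ≤ -(α * lam ^ 2 * ‖d‖ ^ 2) ∧ -(α * lam ^ 2 * ‖d‖ ^ 2) ≤ 0 ∧
      f xp ≤ f x := by
  obtain ⟨hα0, hα1⟩ := hα
  have key : ⟪g, d⟫ ≤ -‖d‖ ^ 2 := by
    have h1 : ⟪g, d⟫ + ⟪d, d⟫ ≤ 0 := by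
      rw [PiLp.inner_apply, PiLp.inner_apply, ← Finset.sum_add_distrib]
      apply Finset.sum_nonpos
      intro i _
      have hdi := hd i
      have hxi := hx i
      rcases le_or_gt (x i - g i) 0 with h | h
      · rw [max_eq_right h] at hdi
        simp only [RCLike.inner_apply, conj_trivial]
        nlinarith
      · rw [max_eq_left h.le] at hdi
        simp only [RCLike.inner_apply, conj_trivial]
        nlinarith
    have h2 : ⟪d, d⟫ = ‖d‖ ^ 2 := real_inner_self_eq_norm_sq d
    linarith
  have hsub : xp - x = lam • d := by rw [hxp]; abel
  have hinner : ⟪g, xp - x⟫ = lam * ⟪g, d⟫ := by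
    rw [hsub, real_inner_smul_right]
  have h3 : f xp - f x ≤ -(α * lam ^ 2 * ‖d‖ ^ 2) := by
    rw [hinner] at harmijo
    have hm : α * lam ^ 2 * ⟪g, d⟫ ≤ α * lam ^ 2 * (-‖d‖ ^ 2) :=
      mul_le_mul_of_nonneg_left key (by positivity)
    nlinarith
  have h4 : -(α * lam ^ 2 * ‖d‖ ^ 2) ≤ 0 := neg_nonpos.mpr (by positivity)
  exact ⟨h3, h4, by linarith⟩
end

section
/- Let f : ℝⁿ → ℝ be differentiable and bounded below by m ∈ ℝ, let α ∈ (0,1) and 0 < λ_min ≤ 1. Let (x_k) be a sequence in ℝⁿ with x₀ componentwise nonnegative, and for each k let λ_k ∈ [λ_min, 1], d_k = [x_k − ∇f(x_k)]₊ − x_k, and x_{k+1} = x_k + λ_k d_k, and assume the Armijo inequality f(x_{k+1}) − f(x_k) ≤ α·λ_k·⟨∇f(x_k), x_{k+1} − x_k⟩ holds for every k. Then every x_k is componentwise nonnegative, the sequence (f(x_k)) is monotonically non-increasing and convergent, and ‖d_k‖ → 0 as k → ∞; that is, the residual of the projected-gradient equilibrium equation x = [x − ∇f(x)]₊ tends to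 zero along the iterates. -/
open RealInnerProductSpace Filter

/-- Convergence of the DTPNN algorithm with Armijo backtracking: the iterates
stay in the nonnegative orthant, the objective values are monotonically
non-increasing and convergent, and the residual `‖d_k‖` of the projected
gradient equilibrium equation tends to zero. -/
theorem stmt12 (n : ℕ) (f : EuclideanSpace ℝ (Fin n) → ℝ)
    (hf : Differentiable ℝ f) (m : ℝ) (hm : ∀ y, m ≤ f y)
    (α : ℝ) (hα : α ∈ Set.Ioo (0 : ℝ) 1)
    (lamMin : ℝ) (hlamMin : 0 < lamMin) (hlamMin1 : lamMin ≤ 1)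
    (x : ℕ → EuclideanSpace ℝ (Fin n)) (hx0 : ∀ i, 0 ≤ x 0 i)
    (lam : ℕ → ℝ) (hlam : ∀ k, lam k ∈ Set.Icc lamMin 1)
    (d : ℕ → EuclideanSpace ℝ (Fin n))
    (hd : ∀ k i, d k i = max (x k i - (gradient f (x k)) i) 0 - x k i)
    (hstep : ∀ k, x (k + 1) = x k + lam k • d k)
    (harmijo : ∀ k, f (x (k + 1)) - f (x k) ≤
      α * lam k * ⟪gradient f (x k), x (k + 1) - x k⟫) :
    (∀ k i, 0 ≤ x k i) ∧ (∀ k, f (x (k + 1)) ≤ f (x k)) ∧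
      (∃ L, Tendsto (fun k => f (x k)) atTop (nhds L)) ∧
      Tendsto (fun k => ‖d k‖) atTop (nhds 0) := by
  have hlampos : ∀ k, 0 ≤ lam k := fun k => le_trans hlamMin.le (hlam k).1
  have hα0 : 0 < α := hα.1
  -- nonnegativity of iterates
  have hxnn : ∀ k i, 0 ≤ x k i := by
    intro k
    induction k with
    | zero => exact hx0
    | succ k ih =>
      intro i
      have hxs : x (k + 1) i = x k i + lam k * d k i := by
        rw [hstep k]; rfl
      rw [hxs, hd k i]
      have h1 : 0 ≤ 1 - lam k := by linarith [(hlam k).2]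
      have h2 : 0 ≤ lam k := hlampos k
      have heq : x k i + lam k * (max (x k i - gradient f (x k) i) 0 - x k i)
          = (1 - lam k) * x k i + lam k * max (x k i - gradient f (x k) i) 0 := by ring
      rw [heq]
      exact add_nonneg (mul_nonneg h1 (ih i)) (mul_nonneg h2 (le_max_right _ _))
  -- key projection inequality
  have hkey : ∀ k, ⟪gradient f (x k), d k⟫ ≤ -‖d k‖ ^ 2 := by
    intro k
    have h : ⟪gradient f (x k) + d k, d k⟫ ≤ 0 := by
      rw [PiLp.inner_apply]
      apply Finset.sum_nonpos
      intro i _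
      simp only [RCLike.inner_apply, starRingEnd_apply, star_trivial, PiLp.add_apply]
      rw [hd k i]
      rcases le_or_gt (x k i - gradient f (x k) i) 0 with h0 | h0
      · rw [max_eq_right h0]
        have := hxnn k i
        nlinarith
      · rw [max_eq_left h0.le]
        nlinarith
    rw [inner_add_left, real_inner_self_eq_norm_sq] at h
    linarith
  -- sufficient decrease
  have hdec2 : ∀ k, α * lamMin ^ 2 * ‖d k‖ ^ 2 ≤ f (x k) - f (x (k + 1)) := by
    intro k
    have ha := harmijo k
    have hstepk : x (k + 1) - x k = lam k • d k := by rw [hstep k]; abel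
    rw [hstepk, real_inner_smul_right] at ha
    have hk := hkey k
    have hl1 := (hlam k).1
    have hsq : lamMin ^ 2 ≤ lam k ^ 2 := by nlinarith [hlampos k]
    have h1 : lam k * ⟪gradient f (x k), d k⟫ ≤ lam k * (-‖d k‖ ^ 2) :=
      mul_le_mul_of_nonneg_left hk (hlampos k)
    have h2 : α * lam k * (lam k * ⟪gradient f (x k), d k⟫)
        ≤ α * lam k * (lam k * (-‖d k‖ ^ 2)) := by
      apply mul_le_mul_of_nonneg_left h1 (mul_nonneg hα0.le (hlampos k))
    have h3 : α * lam k * (lam k * (-‖d k‖ ^ 2)) ≤ -(α * lamMin ^ 2 * ‖d k‖ ^ 2) := by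
      have hnn := sq_nonneg (‖d k‖)
      nlinarith [mul_nonneg (mul_nonneg hα0.le hnn) (sub_nonneg.mpr hsq)]
    linarith
  have hdec : ∀ k, f (x (k + 1)) ≤ f (x k) := by
    intro k
    have h := hdec2 k
    have : 0 ≤ α * lamMin ^ 2 * ‖d k‖ ^ 2 := by positivity
    linarith
  -- convergence of f values
  have hanti : Antitone fun k => f (x k) := antitone_nat_of_succ_le hdec
  have hbdd : BddBelow (Set.range fun k => f (x k)) :=
    ⟨m, by rintro y ⟨k, rfl⟩; exact hm (x k)⟩
  have hL : Tendsto (fun k => f (x k)) atTop (nhds (⨅ k, f (x k))) :=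
    tendsto_atTop_ciInf hanti hbdd
  have hL' : Tendsto (fun k => f (x (k + 1))) atTop (nhds (⨅ k, f (x k))) :=
    hL.comp (tendsto_add_atTop_nat 1)
  have hdiff : Tendsto (fun k => f (x k) - f (x (k + 1))) atTop (nhds 0) := by
    have := hL.sub hL'
    simpa using this
  -- squeeze: ‖d k‖² → 0
  have hc : 0 < α * lamMin ^ 2 := by positivity
  have hsqz : Tendsto (fun k => ‖d k‖ ^ 2) atTop (nhds 0) := by
    apply squeeze_zero (fun k => sq_nonneg _)
      (g := fun k => (α * lamMin ^ 2)⁻¹ * (f (x k) - f (x (k + 1))))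
    · intro k
      have h := hdec2 k
      rw [inv_mul_eq_div, le_div_iff₀ hc]
      nlinarith
    · have := hdiff.const_mul (α * lamMin ^ 2)⁻¹
      simpa using this
  have : Tendsto (fun k => Real.sqrt (‖d k‖ ^ 2)) atTop (nhds (Real.sqrt 0)) :=
    (Real.continuous_sqrt.tendsto 0).comp hsqz
  have hdn : Tendsto (fun k => ‖d k‖) atTop (nhds 0) := by
    simpa [Real.sqrt_sq (norm_nonneg _)] using this
  exact ⟨hxnn, hdec, ⟨_, hL⟩, hdn⟩
end

section
/- Let X : {1,…,I₁}×{1,…,I₂}×{1,…,I₃} → ℝ be a third-order tensor, let B ∈ ℝ^{I₂×R}, C ∈ ℝ^{I₃×R}, and let M ∈ ℝ^{I₁×(I₃·I₂)} be the mode-1 unfolding of X, with entries M_{i,(k,j)} = X_{i,j,k}. Define F : ℝ^{I₁×R} → ℝ by F(A) = ½ Σ_{i,j,k} (X_{i,j,k} − Σ_{r=1}^R A_{i,r}B_{j,r}C_{k,r})². Then the gradient of F at A with respect to the Frobenius inner product equals A·((CᵀC) ∗ (BᵀB)) − M·(C ⊙ B), where ∗ is the Hadamard (entrywise) product and C ⊙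 B ∈ ℝ^{(I₃·I₂)×R} is the Khatri–Rao product with entries (C ⊙ B)_{(k,j),r} = C_{k,r}B_{j,r}. -/
open Matrix

attribute [local instance] Matrix.frobeniusNormedAddCommGroup Matrix.frobeniusNormedSpace

/-!
Each entry `∑ r, A i r * B j r * C k r` of `[[A,B,C]]` is a linear functional `ℓᵢⱼₖ` of `A`, so
`F` is half a sum of squared affine residuals and `dF_A(H) = ∑ᵢⱼₖ (ℓᵢⱼₖ A - Xᵢⱼₖ) ℓᵢⱼₖ H`.
Collecting the coefficient of `H i r` gives `∑ⱼₖ (ℓᵢⱼₖ A - Xᵢⱼₖ) B j r C k r`, whose first part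
is `(A ((CᵀC) ∗ (BᵀB))) i r` (the Gram matrices appear after summing over `j` and `k`) and whose
second part is `(X₍₁₎ (C ⊙ B)) i r`.
-/

theorem exists_hasFDerivAt_half_sum_sq_sub {ι E : Type*} [Fintype ι] [NormedAddCommGroup E]
    [NormedSpace ℝ E] [FiniteDimensional ℝ E] (y : ι → ℝ) (ℓ : ι → E →ₗ[ℝ] ℝ) (x : E) :
    ∃ φ : E →L[ℝ] ℝ, HasFDerivAt (fun x => (1 / 2) * ∑ n, (y n - ℓ n x) ^ 2) φ x ∧
      ∀ v, φ v = ∑ n, (ℓ n x - y n) * ℓ n v := by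
  have hsq (n : ι) :=
    ((ℓ n).toContinuousLinearMap.hasFDerivAt (x := x)).const_sub (y n) |>.pow 2
  refine ⟨_, (HasFDerivAt.fun_sum fun n _ => hsq n).const_mul (1 / 2), fun v => ?_⟩
  simp only [_root_.smul_apply, _root_.sum_apply, _root_.neg_apply, smul_eq_mul, Finset.mul_sum,
    LinearMap.coe_toContinuousLinearMap']
  refine Finset.sum_congr rfl fun n _ => ?_
  simp only [nsmul_eq_mul, Nat.cast_ofNat]
  ring

section CP

variable {m n o ρ α : Type*} [CommSemiring α]

def cpEntryLinearMap [Fintype ρ] (B : Matrix n ρ α) (C : Matrix o ρ α) (i : m) (j : n) (k : o) :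
    Matrix m ρ α →ₗ[α] α :=
  ∑ r, (B j r * C k r) • entryLinearMap α α i r

theorem cpEntryLinearMap_apply [Fintype ρ] (B : Matrix n ρ α) (C : Matrix o ρ α) (i : m) (j : n)
    (k : o) (A : Matrix m ρ α) : cpEntryLinearMap B C i j k A = ∑ r, A i r * B j r * C k r := by
  simp only [cpEntryLinearMap, LinearMap.coe_sum, LinearMap.coe_smul, Finset.sum_apply,
    Pi.smul_apply, entryLinearMap_apply, smul_eq_mul]
  exact Finset.sum_congr rfl fun r _ => by ring

theorem mul_hadamard_gram_apply [Fintype n] [Fintype o] [Fintype ρ] (A : Matrix m ρ α)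
    (B : Matrix n ρ α) (C : Matrix o ρ α) (i : m) (r : ρ) :
    (A * ((Cᵀ * C) ⊙ (Bᵀ * B))) i r
      = ∑ j, ∑ k, (∑ s, A i s * B j s * C k s) * (B j r * C k r) := by
  simp only [mul_apply, hadamard_apply, transpose_apply, Finset.sum_mul, Finset.mul_sum]
  rw [← Finset.sum_comm_cycle]
  exact Finset.sum_congr rfl fun j _ => Finset.sum_congr rfl fun k _ =>
    Finset.sum_congr rfl fun s _ => by ring

theorem unfolding_mul_khatriRao_apply [Fintype n] [Fintype o] (X : m → n → o → α)
    (B : Matrix n ρ α) (C : Matrix o ρ α) (M : Matrix m (o × n) α)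
    (hM : ∀ i k j, M i (k, j) = X i j k) (K : Matrix (o × n) ρ α)
    (hK : ∀ k j r, K (k, j) r = C k r * B j r) (i : m) (r : ρ) :
    (M * K) i r = ∑ j, ∑ k, X i j k * (B j r * C k r) := by
  rw [mul_apply, Fintype.sum_prod_type, Finset.sum_comm]
  simp only [hM, hK, mul_comm (C _ r)]

theorem sum_mul_cpEntry_eq_sum_coeff_mul [Fintype m] [Fintype n] [Fintype o] [Fintype ρ] (g : m → n → o → α)
    (B : Matrix n ρ α) (C : Matrix o ρ α) (H : Matrix m ρ α) :
    ∑ i, ∑ j, ∑ k, g i j k * ∑ r, H i r * B j r * C k r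
      = ∑ i, ∑ r, (∑ j, ∑ k, g i j k * (B j r * C k r)) * H i r := by
  simp only [Finset.mul_sum, Finset.sum_mul]
  refine Fintype.sum_congr _ _ fun i => ?_
  rw [Finset.sum_comm_cycle]
  exact Finset.sum_congr rfl fun r _ => Finset.sum_congr rfl fun j _ =>
    Finset.sum_congr rfl fun k _ => by ring

end CP

/-- The gradient (w.r.t. the Frobenius inner product) of the CPD objective
`F(A) = ½‖X − [[A,B,C]]‖_F²` with respect to the first factor matrix equals
`A·((CᵀC) ∗ (BᵀB)) − X₍₁₎·(C ⊙ B)`, where `M = X₍₁₎` is the mode-1 unfolding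
of `X` and `K = C ⊙ B` is the Khatri–Rao product. -/
theorem stmt19 (I₁ I₂ I₃ R : ℕ)
    (X : Fin I₁ → Fin I₂ → Fin I₃ → ℝ)
    (B : Matrix (Fin I₂) (Fin R) ℝ) (C : Matrix (Fin I₃) (Fin R) ℝ)
    (M : Matrix (Fin I₁) (Fin I₃ × Fin I₂) ℝ)
    (hM : ∀ i k j, M i (k, j) = X i j k)
    (K : Matrix (Fin I₃ × Fin I₂) (Fin R) ℝ)
    (hK : ∀ k j r, K (k, j) r = C k r * B j r)
    (F : Matrix (Fin I₁) (Fin R) ℝ → ℝ)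
    (hF : ∀ A, F A =
      (1 / 2) * ∑ i, ∑ j, ∑ k, (X i j k - ∑ r, A i r * B j r * C k r) ^ 2)
    (A : Matrix (Fin I₁) (Fin R) ℝ) :
    ∃ φ : Matrix (Fin I₁) (Fin R) ℝ →L[ℝ] ℝ,
      HasFDerivAt F φ A ∧
        ∀ H, φ H = ∑ i, ∑ r,
          (A * (Matrix.of fun r s => (Cᵀ * C) r s * (Bᵀ * B) r s) - M * K) i r
            * H i r := by
  let ℓ (p : Fin I₁ × Fin I₂ × Fin I₃) : Matrix (Fin I₁) (Fin R) ℝ →ₗ[ℝ] ℝ :=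
    cpEntryLinearMap B C p.1 p.2.1 p.2.2
  have hF_residual : F = fun A => (1 / 2) * ∑ p, (X p.1 p.2.1 p.2.2 - ℓ p A) ^ 2 := by
    funext A
    simp only [hF, Fintype.sum_prod_type, ℓ, cpEntryLinearMap_apply]
  obtain ⟨φ, hφ, hφ_apply⟩ := exists_hasFDerivAt_half_sum_sq_sub _ ℓ A
  refine ⟨φ, hF_residual ▸ hφ, fun H => (hφ_apply H).trans ?_⟩
  simp only [Fintype.sum_prod_type, ℓ, cpEntryLinearMap_apply, sum_mul_cpEntry_eq_sum_coeff_mul]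
  change _ = ∑ i, ∑ r, (A * ((Cᵀ * C) ⊙ (Bᵀ * B)) - M * K) i r * H i r
  simp only [Matrix.sub_apply, mul_hadamard_gram_apply,
    unfolding_mul_khatriRao_apply X B C M hM K hK, ← Finset.sum_sub_distrib, sub_mul]
end
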